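/- arXiv:1703.09835 — 5 statements merged into one kernel-verified Lean document; each statement's English description precedes it below -/
import Mathlib

section
/- Twirling over a unitary 2-design yields a depolarizing-type map: let d ≥ 2 and let (G, U) be a unitary 2-design in dimension d. Then for every superoperator C on M_d(ℂ), E_{g∈G}[Ad(U g)⁻¹ ∘ C ∘ Ad(U g)] = D_{p,t}, where t = tr(C(I_d))/d and p = (Tr(C) − t)/(d² − 1), with Tr(C) denoting the trace of C as a ℂ-linear endomorphism of M_d(ℂ). -/
set_option maxHeartbeats 1000000


noncomputable section

namespace RBPaper

abbrev Mat (d : ℕ) := Matrix (Fin d) (Fin d) ℂ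

abbrev SuperOp (d : ℕ) := Module.End ℂ (Mat d)

/-- The superoperator `X ↦ U X Uᴴ` for a unitary `U`. -/
def Ad {d : ℕ} (U : Matrix.unitaryGroup (Fin d) ℂ) : SuperOp d :=
  LinearMap.mulLeft ℂ (U : Mat d) ∘ₗ LinearMap.mulRight ℂ (star (U : Mat d))

/-- The superoperator `X ↦ tr(X) • I`. -/
def traceMap (d : ℕ) : SuperOp d :=
  (Matrix.traceLinearMap (Fin d) ℂ ℂ).smulRight (1 : Mat d)

/-- The depolarizing-type map `D_{p,t} : X ↦ (t/d)·tr(X)·I + p·(X − (tr(X)/d)·I)`. -/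
def Dpt (d : ℕ) (p t : ℂ) : SuperOp d :=
  (t / d) • traceMap d + p • (LinearMap.id - (d : ℂ)⁻¹ • traceMap d)

/-- The projection `Π₀ : X ↦ X − (tr(X)/d)·I` onto traceless matrices. -/
def Pi0 (d : ℕ) : SuperOp d := LinearMap.id - (d : ℂ)⁻¹ • traceMap d

/-- Uniform average of a finitely-indexed family in a `ℂ`-module. -/
def expG {G : Type*} [Fintype G] {M : Type*} [AddCommMonoid M] [Module ℂ M]
    (f : G → M) : M := (Fintype.card G : ℂ)⁻¹ • ∑ g, f g

/-- `(G, U)` is a unitary 2-design: the conjugation action has no nontrivial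
invariant subspace of the traceless matrices. -/
def IsTwoDesign {d : ℕ} {G : Type*} [Group G] [Fintype G]
    (U : G →* Matrix.unitaryGroup (Fin d) ℂ) : Prop :=
  ∀ W : Submodule ℂ (Mat d),
    W ≤ LinearMap.ker (Matrix.traceLinearMap (Fin d) ℂ ℂ) →
    (∀ (g : G), ∀ X ∈ W, Ad (U g) X ∈ W) →
    W = ⊥ ∨ W = LinearMap.ker (Matrix.traceLinearMap (Fin d) ℂ ℂ)


section AuxLemmas
variable {d : ℕ}

lemma Ad_apply (U : Matrix.unitaryGroup (Fin d) ℂ) (X : Mat d) :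
    Ad U X = (U : Mat d) * X * star (U : Mat d) := by
  simp [Ad, mul_assoc]

lemma Ad_Ad (A B : Matrix.unitaryGroup (Fin d) ℂ) (X : Mat d) :
    Ad A (Ad B X) = Ad (A * B) X := by
  simp [Ad_apply, star_mul, mul_assoc]

lemma Ad_one_apply (X : Mat d) : Ad (1 : Matrix.unitaryGroup (Fin d) ℂ) X = X := by
  simp [Ad_apply]

lemma Ad_matrix_one (U : Matrix.unitaryGroup (Fin d) ℂ) : Ad U (1 : Mat d) = 1 := by
  simpa [Ad_apply] using Matrix.mem_unitaryGroup_iff.mp U.2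

lemma trace_Ad (U : Matrix.unitaryGroup (Fin d) ℂ) (X : Mat d) :
    (Ad U X).trace = X.trace := by
  rw [Ad_apply, Matrix.trace_mul_cycle, Matrix.UnitaryGroup.star_mul_self, one_mul]

lemma trace_traceMap : LinearMap.trace ℂ (Mat d) (traceMap d) = d := by
  have h : traceMap d = dualTensorHom ℂ (Mat d) (Mat d)
      ((Matrix.traceLinearMap (Fin d) ℂ ℂ) ⊗ₜ (1 : Mat d)) := by
    ext X : 1
    simp [traceMap, dualTensorHom_apply]
  rw [h, LinearMap.trace_eq_contract_apply, contractLeft_apply]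
  simp

lemma trace_id_mat : LinearMap.trace ℂ (Mat d) LinearMap.id = (d : ℂ) ^ 2 := by
  rw [LinearMap.trace_id]
  rw [Module.finrank_matrix]
  simp [Module.finrank_self]
  push_cast
  ring

end AuxLemmas

/-- Twirling a superoperator over a unitary 2-design yields the
depolarizing-type map `D_{p,t}` with `t = tr(C(I))/d` and `p = (Tr C − t)/(d² − 1)`. -/
theorem twirl_of_two_design {d : ℕ} (hd : 2 ≤ d) {G : Type*} [Group G] [Fintype G]
    (U : G →* Matrix.unitaryGroup (Fin d) ℂ) (hU : IsTwoDesign U)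
    (C : SuperOp d) :
    expG (fun g : G => Ad ((U g)⁻¹) ∘ₗ C ∘ₗ Ad (U g)) =
      Dpt d ((LinearMap.trace ℂ (Mat d) C - (C 1).trace / d) / ((d : ℂ) ^ 2 - 1))
        ((C 1).trace / d) := by
  set T : SuperOp d := expG (fun g : G => Ad ((U g)⁻¹) ∘ₗ C ∘ₗ Ad (U g)) with hT
  have hdC : (d : ℂ) ≠ 0 := by
    exact_mod_cast Nat.cast_ne_zero.mpr (by omega)
  have hcard : ((Fintype.card G : ℂ))⁻¹ * (Fintype.card G : ℂ) = 1 := by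
    rw [inv_mul_cancel₀]
    exact_mod_cast Nat.cast_ne_zero.mpr Fintype.card_ne_zero
  -- apply T
  have hTapp : ∀ X : Mat d, T X =
      (Fintype.card G : ℂ)⁻¹ • ∑ g, Ad ((U g)⁻¹) (C (Ad (U g) X)) := by
    intro X
    simp [hT, expG, LinearMap.sum_apply]
  -- commutation
  have hcomm : ∀ (h : G) (X : Mat d), T (Ad (U h) X) = Ad (U h) (T X) := by
    intro h X
    rw [hTapp, hTapp, map_smul, map_sum]
    congr 1
    rw [← Equiv.sum_comp (Equiv.mulRight h)
      (fun g => Ad (U h) (Ad ((U g)⁻¹) (C (Ad (U g) X))))]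
    refine Finset.sum_congr rfl fun g _ => ?_
    simp only [Equiv.coe_mulRight]
    rw [Ad_Ad, Ad_Ad]
    congr 2
    · rw [← map_inv, ← map_inv, ← map_mul]
      congr 1
      group
    · rw [← map_mul]
  -- basic objects
  have hd2 : ((d : ℂ) ^ 2 - 1) ≠ 0 := by
    have hc : ((d : ℂ) ^ 2) = ((d ^ 2 : ℕ) : ℂ) := by push_cast; ring
    rw [hc, sub_ne_zero]
    intro h
    have h1 : (d ^ 2 : ℕ) = 1 := by exact_mod_cast h
    nlinarith
  set trL := Matrix.traceLinearMap (Fin d) ℂ ℂ with htrL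
  have htrLapp : ∀ X : Mat d, trL X = X.trace := fun _ => rfl
  have hi0 : (0 : ℕ) < d := by omega
  have hi1 : (1 : ℕ) < d := by omega
  set i0 : Fin d := ⟨0, hi0⟩ with hi0def
  set i1 : Fin d := ⟨1, hi1⟩ with hi1def
  have hi01 : i0 ≠ i1 := by simp [hi0def, hi1def, Fin.ext_iff]
  set E01 : Mat d := Matrix.single i0 i1 1 with hE01
  set E10 : Mat d := Matrix.single i1 i0 1 with hE10
  have hE01tr : E01.trace = 0 := Matrix.trace_single_eq_of_ne _ _ _ hi01
  have hE10tr : E10.trace = 0 := Matrix.trace_single_eq_of_ne _ _ _ (Ne.symm hi01)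
  have hE01app : E01 i0 i1 = 1 := Matrix.single_apply_same _ _ _
  have hE10app : E10 i1 i0 = 1 := Matrix.single_apply_same _ _ _
  have hE01app' : E01 i1 i0 = 0 := by
    rw [hE01, Matrix.single]; simp [hi01, Ne.symm hi01]
  have hE10app' : E10 i0 i1 = 0 := by
    rw [hE10, Matrix.single]; simp [hi01, Ne.symm hi01]
  have hE01ne : E01 ≠ 0 := fun h => by
    rw [h] at hE01app; simp at hE01app
  -- invariance of T 1
  have hAdT1 : ∀ h : G, Ad (U h) (T 1) = T 1 := fun h => by
    rw [← hcomm h 1, Ad_matrix_one]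
  -- trace of T 1
  have htrT1 : (T 1).trace = (C 1).trace := by
    rw [hTapp, Matrix.trace_smul, Matrix.trace_sum]
    simp only [Ad_matrix_one, trace_Ad]
    rw [Finset.sum_const, Finset.card_univ, nsmul_eq_mul, smul_eq_mul, ← mul_assoc, hcard,
      one_mul]
  -- T 1 is scalar
  have hT1 : T 1 = ((C 1).trace / d) • 1 := by
    set M0 : Mat d := T 1 - ((T 1).trace / d) • 1 with hM0
    have hM0tr : M0.trace = 0 := by
      rw [hM0, Matrix.trace_sub, Matrix.trace_smul, Matrix.trace_one, Fintype.card_fin, smul_eq_mul]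
      field_simp
      ring
    have hM0inv : ∀ h : G, Ad (U h) M0 = M0 := fun h => by
      rw [hM0, map_sub, map_smul, hAdT1, Ad_matrix_one]
    have hM0zero : M0 = 0 := by
      rcases hU (Submodule.span ℂ {M0})
          (by rw [Submodule.span_le, Set.singleton_subset_iff]
              exact LinearMap.mem_ker.mpr hM0tr)
          (by intro g X hX
              rcases Submodule.mem_span_singleton.mp hX with ⟨a, rfl⟩
              rw [map_smul, hM0inv]
              exact Submodule.smul_mem _ _ (Submodule.mem_span_singleton_self (R := ℂ) _)) with hW | hW
      · have h := Submodule.mem_span_singleton_self (R := ℂ) M0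
        rw [hW] at h
        simpa using h
      · exfalso
        have h01 : E01 ∈ Submodule.span ℂ {M0} := by
          rw [hW]; exact LinearMap.mem_ker.mpr hE01tr
        have h10 : E10 ∈ Submodule.span ℂ {M0} := by
          rw [hW]; exact LinearMap.mem_ker.mpr hE10tr
        rcases Submodule.mem_span_singleton.mp h01 with ⟨a, ha⟩
        rcases Submodule.mem_span_singleton.mp h10 with ⟨b, hb⟩
        have hab : b • E01 = a • E10 := by
          rw [← ha, ← hb, smul_smul, smul_smul, mul_comm]
        have hb0 : b = 0 := by
          have := congrFun (congrFun hab i0) i1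
          simpa [hE01app, hE10app'] using this
        have : E10 = 0 := by rw [← hb, hb0, zero_smul]
        rw [this] at hE10app
        simp at hE10app
    have := sub_eq_zero.mp hM0zero
    rw [this, htrT1]
  -- T preserves tracelessness
  have hTtl : ∀ X : Mat d, X.trace = 0 → (T X).trace = 0 := by
    have hWle : LinearMap.ker trL ⊓ LinearMap.ker (trL ∘ₗ T) ≤ LinearMap.ker trL := inf_le_left
    rcases hU (LinearMap.ker trL ⊓ LinearMap.ker (trL ∘ₗ T)) hWle
        (by rintro g X hX
            rcases Submodule.mem_inf.mp hX with ⟨h1, h2⟩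
            refine Submodule.mem_inf.mpr ⟨?_, ?_⟩
            · rw [LinearMap.mem_ker, htrLapp, trace_Ad]
              exact h1
            · rw [LinearMap.mem_ker, LinearMap.comp_apply, htrLapp, hcomm, trace_Ad]
              exact h2) with hW | hW
    · -- degenerate case: derive everything is traceless-killed anyway
      have key : ∀ X Y : Mat d, X.trace = 0 → Y.trace = 0 →
          (T Y).trace • X = (T X).trace • Y := by
        intro X Y hX hY
        have hmem : (T Y).trace • X - (T X).trace • Y ∈
            LinearMap.ker trL ⊓ LinearMap.ker (trL ∘ₗ T) := by
          refine Submodule.mem_inf.mpr ⟨?_, ?_⟩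
          · rw [LinearMap.mem_ker, map_sub, map_smul, map_smul, htrLapp, htrLapp, hX, hY]
            simp
          · rw [LinearMap.mem_ker, LinearMap.comp_apply, map_sub, map_smul, map_smul,
              htrLapp, Matrix.trace_sub, Matrix.trace_smul, Matrix.trace_smul]
            simp [smul_eq_mul, mul_comm]
        rw [hW] at hmem
        have := (Submodule.mem_bot ℂ).mp hmem
        exact sub_eq_zero.mp this
      intro X hX
      have hE : (T E01).trace = 0 := by
        have h := key E10 E01 hE10tr hE01tr
        have h2 := congrFun (congrFun h i1) i0
        simpa [hE10app, hE01app'] using h2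
      have h := key X E01 hX hE01tr
      have h2 := congrFun (congrFun h i0) i1
      rw [hE] at h2
      simpa [hE01app] using h2.symm
    · intro X hX
      have : X ∈ LinearMap.ker trL ⊓ LinearMap.ker (trL ∘ₗ T) := by
        rw [hW]; exact LinearMap.mem_ker.mpr hX
      have h2 := (Submodule.mem_inf.mp this).2
      rw [LinearMap.mem_ker, LinearMap.comp_apply, htrLapp] at h2
      exact h2
  -- eigenvalue on traceless subspace
  have hVmap : ∀ X ∈ LinearMap.ker trL, T X ∈ LinearMap.ker trL := by
    intro X hX
    exact LinearMap.mem_ker.mpr (hTtl X (LinearMap.mem_ker.mp hX))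
  haveI : Nontrivial ↥(LinearMap.ker trL) := by
    refine nontrivial_of_ne ⟨E01, LinearMap.mem_ker.mpr hE01tr⟩ 0 ?_
    intro h
    exact hE01ne (by simpa using congrArg Subtype.val h)
  obtain ⟨μ, hμ⟩ := Module.End.exists_eigenvalue (T.restrict hVmap)
  obtain ⟨v, hv⟩ := hμ.exists_hasEigenvector
  have hvm : T (v : Mat d) = μ • (v : Mat d) := by
    have h := congrArg Subtype.val hv.apply_eq_smul
    simpa [LinearMap.restrict_coe_apply] using h
  have hTscalar : ∀ X : Mat d, X.trace = 0 → T X = μ • X := by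
    have hle : LinearMap.ker trL ⊓ LinearMap.ker (T - μ • LinearMap.id) ≤ LinearMap.ker trL :=
      inf_le_left
    rcases hU (LinearMap.ker trL ⊓ LinearMap.ker (T - μ • LinearMap.id)) hle
        (by rintro g X hX
            rcases Submodule.mem_inf.mp hX with ⟨h1, h2⟩
            rw [LinearMap.mem_ker] at h1 h2
            rw [LinearMap.sub_apply, LinearMap.smul_apply, LinearMap.id_apply,
              sub_eq_zero] at h2
            refine Submodule.mem_inf.mpr ⟨?_, ?_⟩
            · rw [LinearMap.mem_ker, htrLapp, trace_Ad]
              exact h1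
            · rw [LinearMap.mem_ker, LinearMap.sub_apply, LinearMap.smul_apply,
                LinearMap.id_apply, sub_eq_zero, hcomm, h2, map_smul]) with hW | hW
    · exfalso
      have hvW : (v : Mat d) ∈ LinearMap.ker trL ⊓ LinearMap.ker (T - μ • LinearMap.id) := by
        refine Submodule.mem_inf.mpr ⟨v.2, ?_⟩
        rw [LinearMap.mem_ker, LinearMap.sub_apply, LinearMap.smul_apply, LinearMap.id_apply,
          sub_eq_zero, hvm]
      rw [hW] at hvW
      exact hv.2 (Subtype.ext ((Submodule.mem_bot ℂ).mp hvW))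
    · intro X hX
      have : X ∈ LinearMap.ker trL ⊓ LinearMap.ker (T - μ • LinearMap.id) := by
        rw [hW]; exact LinearMap.mem_ker.mpr hX
      have h2 := (Submodule.mem_inf.mp this).2
      rw [LinearMap.mem_ker, LinearMap.sub_apply, LinearMap.smul_apply, LinearMap.id_apply,
        sub_eq_zero] at h2
      exact h2
  -- T equals Dpt μ t
  set t : ℂ := (C 1).trace / d with ht
  have hTD : ∀ X : Mat d, T X = (t / d) • (X.trace • 1) +
      μ • (X - (d : ℂ)⁻¹ • (X.trace • 1)) := by
    intro X
    have hX0 : (X - (X.trace / d) • 1).trace = 0 := by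
      rw [Matrix.trace_sub, Matrix.trace_smul, Matrix.trace_one, Fintype.card_fin, smul_eq_mul]
      field_simp
      ring
    have hdecomp : X = (X.trace / d) • 1 + (X - (X.trace / d) • 1) := by ring_nf; abel
    calc T X = T ((X.trace / d) • 1 + (X - (X.trace / d) • 1)) := by rw [← hdecomp]
      _ = (X.trace / d) • T 1 + T (X - (X.trace / d) • 1) := by rw [map_add, map_smul]
      _ = (X.trace / d) • (t • 1) + μ • (X - (X.trace / d) • 1) := by
          rw [hT1, hTscalar _ hX0, ht]
      _ = (t / d) • (X.trace • 1) + μ • (X - (d : ℂ)⁻¹ • (X.trace • 1)) := by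
          rw [smul_smul, smul_smul, smul_smul]
          rw [show Matrix.trace X / (d : ℂ) * t = t / d * Matrix.trace X by ring,
            show Matrix.trace X / (d : ℂ) = (d : ℂ)⁻¹ * Matrix.trace X by ring]
  -- trace of T
  have htrT : LinearMap.trace ℂ (Mat d) T = (LinearMap.trace ℂ (Mat d)) C := by
    rw [hT, expG, map_smul, map_sum]
    have heach : ∀ g : G, LinearMap.trace ℂ (Mat d) (Ad ((U g)⁻¹) ∘ₗ C ∘ₗ Ad (U g)) =
        LinearMap.trace ℂ (Mat d) C := by
      intro g
      rw [LinearMap.trace_comp_comm']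
      have : (C ∘ₗ Ad (U g)) ∘ₗ Ad ((U g)⁻¹) = C := by
        apply LinearMap.ext
        intro X
        simp only [LinearMap.comp_apply]
        rw [Ad_Ad, mul_inv_cancel, Ad_one_apply]
      rw [this]
    simp only [heach]
    rw [Finset.sum_const, Finset.card_univ, nsmul_eq_mul, smul_eq_mul, ← mul_assoc, hcard,
      one_mul]
  -- conclude
  have hTeq : T = Dpt d μ t := by
    apply LinearMap.ext
    intro X
    rw [hTD X]
    simp only [Dpt, traceMap, LinearMap.add_apply, LinearMap.smul_apply, LinearMap.sub_apply,
      LinearMap.smulRight_apply, LinearMap.id_apply, Matrix.traceLinearMap, LinearMap.coe_mk, AddHom.coe_mk]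
  have htrD : LinearMap.trace ℂ (Mat d) (Dpt d μ t) = t + μ * ((d : ℂ) ^ 2 - 1) := by
    rw [Dpt, map_add, map_smul, map_smul, map_sub, map_smul, trace_traceMap, trace_id_mat]
    rw [smul_eq_mul, smul_eq_mul, smul_eq_mul, div_mul_cancel₀ _ hdC, inv_mul_cancel₀ hdC]
  have hμp : μ = (LinearMap.trace ℂ (Mat d) C - t) / ((d : ℂ) ^ 2 - 1) := by
    have h := htrT
    rw [hTeq, htrD] at h
    rw [← h]
    field_simp
    ring
  rw [hTeq, hμp]

end RBPaper
end
end

section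
/- Existence of a right noise map (second part of Theorem 1): let G be a finite group, U : G → U(d) a group homomorphism, and T : G → superoperators an arbitrary family. Let W' be the subspace of superoperators X with Π₀ ∘ X = X (equivalently, tr(X(Y)) = 0 for all Y ∈ M_d(ℂ)), and let Ψ be the linear endomorphism of the space of superoperators defined by Ψ(X) = E_{g∈G}[Π₀ ∘ Ad(U g)⁻¹ ∘ X ∘ T(g)]. Then Ψ maps W' into W', and for every eigenvalue t of the superoperator E_{g∈G} T(g) and every eigenvalue p of the restriction of Ψ to W', there exists a nonzero superoperator R satisfying E_{g∈G}[Ad(U g)⁻¹ ∘ R ∘ T(g)] = D_{p,t} ∘ R. -/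
set_option synthInstance.maxHeartbeats 1000000
noncomputable section

namespace RBPaper

/-- The subspace of superoperators `X` with `Π₀ ∘ X = X` (equivalently,
`tr(X(Y)) = 0` for all `Y`). -/
def Wright (d : ℕ) : Submodule ℂ (SuperOp d) :=
  LinearMap.ker
    (LinearMap.llcomp ℂ (Mat d) (Mat d) (Mat d) (Pi0 d) - LinearMap.id)

/-- The endomorphism `Ψ(X) = E_g [Π₀ ∘ Ad(U g)⁻¹ ∘ X ∘ T(g)]` of the space of
superoperators. -/
def PsiRight {d : ℕ} {G : Type*} [Group G] [Fintype G]
    (U : G →* Matrix.unitaryGroup (Fin d) ℂ) (T : G → SuperOp d) :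
    SuperOp d →ₗ[ℂ] SuperOp d :=
  expG (fun g : G =>
    LinearMap.llcomp ℂ (Mat d) (Mat d) (Mat d) (Pi0 d ∘ₗ Ad ((U g)⁻¹)) ∘ₗ
      LinearMap.lcomp ℂ (Mat d) (T g))


lemma traceMap_comp_Ad {d : ℕ} (V : Matrix.unitaryGroup (Fin d) ℂ) :
    traceMap d ∘ₗ Ad V = traceMap d := by
  apply LinearMap.ext; intro X
  simp only [traceMap, Ad, LinearMap.comp_apply, LinearMap.mulLeft_apply,
    LinearMap.mulRight_apply, LinearMap.smulRight_apply, Matrix.traceLinearMap_apply]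
  rw [← mul_assoc, Matrix.trace_mul_cycle, Matrix.UnitaryGroup.star_mul_self, one_mul]

lemma Pi0_comp {d : ℕ} (B : SuperOp d) :
    Pi0 d ∘ₗ B = B - (d : ℂ)⁻¹ • (traceMap d ∘ₗ B) := by
  rw [Pi0, LinearMap.sub_comp, LinearMap.smul_comp, LinearMap.id_comp]

lemma traceMap_comp_traceMap {d : ℕ} :
    traceMap d ∘ₗ traceMap d = (d : ℂ) • traceMap d := by
  apply LinearMap.ext; intro X
  simp [traceMap, Matrix.trace_smul, Matrix.trace_one, smul_smul, mul_comm]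

lemma traceMap_comp_Pi0 {d : ℕ} (hd : d ≠ 0) :
    traceMap d ∘ₗ Pi0 d = 0 := by
  rw [Pi0, LinearMap.comp_sub, LinearMap.comp_smul, LinearMap.comp_id,
    traceMap_comp_traceMap, smul_smul, inv_mul_cancel₀ (by exact_mod_cast hd), one_smul,
    sub_self]

lemma mem_Wright_iff {d : ℕ} (X : SuperOp d) :
    X ∈ Wright d ↔ Pi0 d ∘ₗ X = X := by
  rw [Wright, LinearMap.mem_ker, LinearMap.sub_apply, LinearMap.id_apply, sub_eq_zero,
    LinearMap.llcomp_apply']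

lemma expG_apply {G : Type*} [Fintype G] {M N : Type*} [AddCommMonoid M]
    [Module ℂ M] [AddCommMonoid N] [Module ℂ N] (f : G → (M →ₗ[ℂ] N)) (x : M) :
    expG f x = expG fun g => f g x := by
  simp [expG, LinearMap.sum_apply]

lemma comp_expG {d : ℕ} {G : Type*} [Fintype G] (L : SuperOp d) (f : G → SuperOp d) :
    L ∘ₗ expG f = expG fun g => L ∘ₗ f g := by
  have : L ∘ₗ expG f = LinearMap.llcomp ℂ (Mat d) (Mat d) (Mat d) L (expG f) := rfl
  rw [this, expG, map_smul, map_sum]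
  simp [expG, LinearMap.llcomp_apply']

lemma PsiRight_apply {d : ℕ} {G : Type*} [Group G] [Fintype G]
    (U : G →* Matrix.unitaryGroup (Fin d) ℂ) (T : G → SuperOp d) (X : SuperOp d) :
    PsiRight U T X = expG fun g => Pi0 d ∘ₗ (Ad ((U g)⁻¹) ∘ₗ X ∘ₗ T g) := by
  rw [PsiRight, expG_apply]; rfl

/-- Existence of a right noise map (second part of Theorem 1). -/
theorem right_noise_exists {d : ℕ} {G : Type*} [Group G] [Fintype G]
    (U : G →* Matrix.unitaryGroup (Fin d) ℂ) (T : G → SuperOp d) :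
    (∀ X ∈ Wright d, PsiRight U T X ∈ Wright d) ∧
      ∀ (hΨ : ∀ X ∈ Wright d, PsiRight U T X ∈ Wright d) (t p : ℂ),
        Module.End.HasEigenvalue (R := ℂ) (M := Mat d) (expG (fun g : G => T g)) t →
        Module.End.HasEigenvalue (R := ℂ) (M := ↥(Wright d))
          ((PsiRight U T).restrict hΨ) p →
        ∃ R : SuperOp d, R ≠ 0 ∧
          expG (fun g : G => Ad ((U g)⁻¹) ∘ₗ R ∘ₗ T g) = Dpt d p t ∘ₗ R := by
  constructor
  · intro X _
    rcases eq_or_ne d 0 with rfl | hd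
    · have : Subsingleton (Mat 0) := ⟨fun a b => by ext i j; exact absurd i.2 (by omega)⟩
      rw [Wright, LinearMap.mem_ker]
      apply LinearMap.ext; intro Y
      exact Subsingleton.elim _ _
    · rw [mem_Wright_iff, PsiRight_apply, comp_expG]
      congr 1; funext g
      rw [← LinearMap.comp_assoc, ← LinearMap.comp_assoc, Pi0_comp (Pi0 d),
        traceMap_comp_Pi0 hd, smul_zero, sub_zero, LinearMap.comp_assoc]
  · intro hΨ t p ht hp
    rcases eq_or_ne d 0 with rfl | hd
    · exfalso
      have hsub : Subsingleton (Mat 0) := ⟨fun a b => by ext i j; exact absurd i.2 (by omega)⟩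
      obtain ⟨v, hv⟩ := ht.exists_hasEigenvector
      exact hv.2 (Subsingleton.elim v 0)
    · obtain ⟨S, hS⟩ := hp.exists_hasEigenvector
      have hPi0S : Pi0 d ∘ₗ (S : SuperOp d) = (S : SuperOp d) :=
        (mem_Wright_iff _).mp S.2
      have hSne : (S : SuperOp d) ≠ 0 := fun h => hS.2 (Subtype.ext h)
      have htmS : traceMap d ∘ₗ (S : SuperOp d) = 0 := by
        have h := Pi0_comp (d := d) (S : SuperOp d)
        rw [hPi0S] at h
        have h2 : (d : ℂ)⁻¹ • (traceMap d ∘ₗ (S : SuperOp d)) = 0 := by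
          have := sub_eq_self.mp h.symm
          exact this
        have hdc : ((d : ℂ))⁻¹ ≠ 0 := inv_ne_zero (by exact_mod_cast hd)
        exact (smul_eq_zero.mp h2).resolve_left hdc
      have hpsi : PsiRight U T (S : SuperOp d) = p • (S : SuperOp d) := by
        have h1 : ((PsiRight U T).restrict hΨ) S = p • S := hS.apply_eq_smul
        have h2 : (((PsiRight U T).restrict hΨ) S : SuperOp d)
            = PsiRight U T (S : SuperOp d) := LinearMap.restrict_coe_apply _ _ _
        rw [h1, Submodule.coe_smul] at h2
        exact h2.symm
      refine ⟨S, hSne, ?_⟩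
      have step : ∀ g : G, Pi0 d ∘ₗ (Ad ((U g)⁻¹) ∘ₗ (S : SuperOp d) ∘ₗ T g)
          = Ad ((U g)⁻¹) ∘ₗ (S : SuperOp d) ∘ₗ T g := by
        intro g
        have htm : traceMap d ∘ₗ (Ad ((U g)⁻¹) ∘ₗ (S : SuperOp d) ∘ₗ T g) = 0 := by
          rw [← LinearMap.comp_assoc, ← LinearMap.comp_assoc, traceMap_comp_Ad,
            LinearMap.comp_assoc, ← LinearMap.comp_assoc, htmS, LinearMap.zero_comp]
        rw [Pi0_comp, htm, smul_zero, sub_zero]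
      have lhs : expG (fun g : G => Ad ((U g)⁻¹) ∘ₗ (S : SuperOp d) ∘ₗ T g)
          = PsiRight U T (S : SuperOp d) := by
        rw [PsiRight_apply]
        congr 1; funext g; rw [step]
      rw [lhs, hpsi, Dpt, LinearMap.add_comp, LinearMap.smul_comp, LinearMap.smul_comp]
      have : (LinearMap.id - (d : ℂ)⁻¹ • traceMap d) ∘ₗ (S : SuperOp d)
          = (S : SuperOp d) := hPi0S
      rw [this, htmS, smul_zero, zero_add]

end RBPaper
end
end

section
/- Exponential bound on the randomized benchmarking perturbation (norm bound of Theorem 3): let G be a finite group, V a finite-dimensional normed ℂ-vector space, and Δ : G → (V →L V) a family of continuous linear endomorphisms, with ‖·‖ the operator norm. Then for every integer m ≥ 1, ‖E_{(g₁,…,g_m)∈G^m}[Δ(g_{m+1}) ∘ Δ(g_m) ∘ ⋯ ∘ Δ(g₁)]‖ ≤ (max_{g∈G} ‖Δ(g)‖) · (E_{h∈G} ‖Δ(h)‖)^m, where g_{m+1} = (g_m g_{m−1} ⋯ g₁)⁻¹. -/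
noncomputable section

namespace RBPaper

/-- The ordered product `g_m · g_{m−1} ⋯ g_1` of a tuple of group elements. -/
def gprod {G : Type*} [Group G] {m : ℕ} (g : Fin m → G) : G :=
  ((List.ofFn g).reverse).prod

/-- The randomized-benchmarking sequence product
`Δ(g_{m+1}) ∘ Δ(g_m) ∘ ⋯ ∘ Δ(g_1)`, where `g_{m+1} = (g_m ⋯ g_1)⁻¹`. -/
def seqProd {G : Type*} [Group G] {m : ℕ} {A : Type*} [Monoid A]
    (T : G → A) (g : Fin m → G) : A :=
  T (gprod g)⁻¹ * ((List.ofFn fun i => T (g i)).reverse).prod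

/-- Uniform average over all `m`-tuples of group elements, in an `ℝ`-module. -/
def expGmR {G : Type*} [Fintype G] {m : ℕ} {M : Type*} [AddCommMonoid M]
    [Module ℝ M] (f : (Fin m → G) → M) : M :=
  ((Fintype.card G : ℝ) ^ m)⁻¹ • ∑ g : Fin m → G, f g

/-- Uniform average of a real-valued family. -/
def expR {G : Type*} [Fintype G] (f : G → ℝ) : ℝ :=
  (Fintype.card G : ℝ)⁻¹ * ∑ g, f g

/-- Exponential bound on the randomized benchmarking
perturbation (norm bound of Theorem 3). -/
theorem rb_perturbation_norm_bound {G : Type*} [Group G] [Fintype G]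
    {V : Type*} [NormedAddCommGroup V] [NormedSpace ℂ V] [FiniteDimensional ℂ V]
    (Δ : G → V →L[ℂ] V) (m : ℕ) (hm : 1 ≤ m) :
    ‖expGmR (fun g : Fin m → G => seqProd Δ g)‖ ≤
      (⨆ g : G, ‖Δ g‖) * (expR fun h : G => ‖Δ h‖) ^ m := by
  classical
  have hne : Nonempty G := ⟨1⟩
  set S := ⨆ g : G, ‖Δ g‖ with hS
  have hbdd : BddAbove (Set.range fun g : G => ‖Δ g‖) :=
    Set.Finite.bddAbove (Set.finite_range _)
  have hSle : ∀ g : G, ‖Δ g‖ ≤ S := fun g => le_ciSup hbdd g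
  have hn : (0:ℝ) ≤ ((Fintype.card G : ℝ) ^ m)⁻¹ := by positivity
  have key : ∀ g : Fin m → G, ‖seqProd Δ g‖ ≤ S * ∏ i, ‖Δ (g i)‖ := by
    intro g
    have hne' : (List.ofFn fun i => Δ (g i)).reverse ≠ [] := by
      simp only [ne_eq, List.reverse_eq_nil_iff, List.ofFn_eq_nil_iff]
      omega
    have h1 : ‖((List.ofFn fun i => Δ (g i)).reverse).prod‖ ≤ ∏ i, ‖Δ (g i)‖ := by
      refine le_trans (List.norm_prod_le' hne') (le_of_eq ?_)
      simp [List.prod_reverse, List.map_ofFn, List.prod_ofFn, Function.comp]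
    calc ‖seqProd Δ g‖ ≤ ‖Δ (gprod g)⁻¹‖ * ‖((List.ofFn fun i => Δ (g i)).reverse).prod‖ :=
          norm_mul_le _ _
      _ ≤ S * ∏ i, ‖Δ (g i)‖ :=
          mul_le_mul (hSle _) h1 (norm_nonneg _) (le_trans (norm_nonneg _) (hSle 1))
  have h1 : ‖expGmR (fun g : Fin m → G => seqProd Δ g)‖ ≤
      ((Fintype.card G : ℝ) ^ m)⁻¹ * ∑ g : Fin m → G, (S * ∏ i, ‖Δ (g i)‖) := by
    rw [expGmR, norm_smul, Real.norm_eq_abs, abs_of_nonneg hn]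
    refine mul_le_mul_of_nonneg_left ?_ hn
    exact le_trans (norm_sum_le _ _) (Finset.sum_le_sum fun g _ => key g)
  have h2 : ∑ g : Fin m → G, (S * ∏ i, ‖Δ (g i)‖) = S * (∑ h : G, ‖Δ h‖) ^ m := by
    rw [← Finset.mul_sum, Fintype.sum_pow]
  rw [h2] at h1
  refine h1.trans (le_of_eq ?_)
  rw [expR, mul_pow, inv_pow]
  ring

end RBPaper
end
end

section
/- Scalar form of the perturbation bound |ε_m| ≤ δ₁·δ₂^m: let G be a finite group and Δ : G → superoperators on M_d(ℂ). Then for all matrices Q, ρ ∈ M_d(ℂ) and every integer m ≥ 1, |E_{(g₁,…,g_m)∈G^m} tr(Qᴴ · (Δ(g_{m+1}) ∘ ⋯ ∘ Δ(g₁))(ρ))| ≤ ‖Q‖_F · ‖ρ‖_F · (max_{g∈G} ‖Δ(g)‖) · (E_{h∈G} ‖Δ(h)‖)^m, where g_{m+1} = (g_m ⋯ g₁)⁻¹. -/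
noncomputable section

open scoped Matrix

namespace RBPaper

attribute [local instance] Matrix.frobeniusSeminormedAddCommGroup
attribute [local instance] Matrix.frobeniusNormedAddCommGroup
attribute [local instance] Matrix.frobeniusNormedSpace

/-- Operator norm of a superoperator, induced by the Frobenius norm on
matrices. -/
def sNorm {d : ℕ} (L : SuperOp d) : ℝ :=
  @Norm.norm _ ContinuousLinearMap.hasOpNorm (LinearMap.toContinuousLinearMap L)

/-- Uniform average over all `m`-tuples of group elements, in a `ℂ`-module. -/
def expGm {G : Type*} [Fintype G] {m : ℕ} {M : Type*} [AddCommMonoid M]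
    [Module ℂ M] (f : (Fin m → G) → M) : M :=
  ((Fintype.card G : ℂ) ^ m)⁻¹ • ∑ g : Fin m → G, f g

lemma sNorm_nonneg {d : ℕ} (L : SuperOp d) : 0 ≤ sNorm L := (LinearMap.toContinuousLinearMap L).opNorm_nonneg

lemma sNorm_apply_le {d : ℕ} (L : SuperOp d) (x : Mat d) : ‖L x‖ ≤ sNorm L * ‖x‖ :=
  (LinearMap.toContinuousLinearMap L).le_opNorm x

lemma list_prod_apply_le {d : ℕ} (l : List (SuperOp d)) (x : Mat d) :
    ‖l.prod x‖ ≤ (l.map sNorm).prod * ‖x‖ := by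
  induction l with
  | nil => simp [Module.End.one_apply]
  | cons a l ih =>
    simp only [List.prod_cons, List.map_cons]
    calc ‖(a * l.prod) x‖ = ‖a (l.prod x)‖ := rfl
      _ ≤ sNorm a * ‖l.prod x‖ := sNorm_apply_le _ _
      _ ≤ sNorm a * ((l.map sNorm).prod * ‖x‖) :=
        mul_le_mul_of_nonneg_left ih (sNorm_nonneg a)
      _ = sNorm a * (l.map sNorm).prod * ‖x‖ := by ring

lemma frobenius_norm_eq_sqrt {d : ℕ} (Q : Mat d) :
    ‖Q‖ = Real.sqrt (∑ p : Fin d × Fin d, ‖Q p.1 p.2‖ ^ 2) := by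
  rw [Matrix.frobenius_norm_def, Real.sqrt_eq_rpow, Fintype.sum_prod_type]
  simp_rw [Real.rpow_two]

lemma abs_trace_le {d : ℕ} (Q X : Mat d) :
    ‖(Qᴴ * X).trace‖ ≤ ‖Q‖ * ‖X‖ := by
  set f : EuclideanSpace ℂ (Fin d × Fin d) := WithLp.toLp 2 (fun p : Fin d × Fin d => Q p.1 p.2)
  set g : EuclideanSpace ℂ (Fin d × Fin d) := WithLp.toLp 2 (fun p : Fin d × Fin d => X p.1 p.2)
  have htr : (Qᴴ * X).trace = inner ℂ f g := by
    rw [Matrix.trace]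
    simp only [Matrix.diag, Matrix.mul_apply, Matrix.conjTranspose_apply]
    rw [Finset.sum_comm]
    simp only [PiLp.inner_apply, RCLike.inner_apply, Fintype.sum_prod_type]
    refine Finset.sum_congr rfl fun a _ => Finset.sum_congr rfl fun b _ => ?_
    exact mul_comm _ _
  have hcs : ‖(inner ℂ f g : ℂ)‖ ≤ ‖f‖ * ‖g‖ := norm_inner_le_norm f g
  rw [htr]
  refine hcs.trans_eq ?_
  rw [EuclideanSpace.norm_eq, EuclideanSpace.norm_eq, frobenius_norm_eq_sqrt,
    frobenius_norm_eq_sqrt]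

/-- Scalar form of the perturbation bound
`|ε_m| ≤ δ₁ · δ₂^m`. -/
theorem scalar_perturbation_bound {d : ℕ} {G : Type*} [Group G] [Fintype G]
    (Δ : G → SuperOp d) (Q ρ : Mat d) (m : ℕ) (hm : 1 ≤ m) :
    ‖expGm (fun g : Fin m → G => (Qᴴ * seqProd Δ g ρ).trace)‖ ≤
      ‖Q‖ * ‖ρ‖ * (⨆ g : G, sNorm (Δ g)) * (expR fun h : G => sNorm (Δ h)) ^ m := by
  classical
  set S : ℝ := ⨆ g : G, sNorm (Δ g) with hS
  have hbdd : BddAbove (Set.range fun g : G => sNorm (Δ g)) :=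
    (Set.finite_range _).bddAbove
  have hSle : ∀ a : G, sNorm (Δ a) ≤ S := fun a => le_ciSup hbdd a
  have hS0 : 0 ≤ S := (sNorm_nonneg _).trans (hSle (1 : G))
  -- pointwise bound
  have key : ∀ g : Fin m → G,
      ‖(Qᴴ * seqProd Δ g ρ).trace‖ ≤
        ‖Q‖ * ‖ρ‖ * S * ∏ i, sNorm (Δ (g i)) := by
    intro g
    have h1 : ‖seqProd Δ g ρ‖ ≤ S * ((∏ i, sNorm (Δ (g i))) * ‖ρ‖) := by
      have h2 : ‖seqProd Δ g ρ‖ =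
          ‖Δ (gprod g)⁻¹ (((List.ofFn fun i => Δ (g i)).reverse).prod ρ)‖ := rfl
      rw [h2]
      have h3 : ‖((List.ofFn fun i => Δ (g i)).reverse).prod ρ‖ ≤
          (∏ i, sNorm (Δ (g i))) * ‖ρ‖ := by
        have := list_prod_apply_le ((List.ofFn fun i => Δ (g i)).reverse) ρ
        rw [List.map_reverse, List.prod_reverse (xs := List.map sNorm _), List.map_ofFn, List.prod_ofFn] at this
        simpa only [Function.comp_apply] using this
      calc ‖Δ (gprod g)⁻¹ (((List.ofFn fun i => Δ (g i)).reverse).prod ρ)‖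
          ≤ sNorm (Δ (gprod g)⁻¹) * ‖((List.ofFn fun i => Δ (g i)).reverse).prod ρ‖ :=
            sNorm_apply_le _ _
        _ ≤ S * ((∏ i, sNorm (Δ (g i))) * ‖ρ‖) := by
            apply mul_le_mul (hSle _) h3 (norm_nonneg _) hS0
    calc ‖(Qᴴ * seqProd Δ g ρ).trace‖ ≤ ‖Q‖ * ‖seqProd Δ g ρ‖ :=
          abs_trace_le _ _
      _ ≤ ‖Q‖ * (S * ((∏ i, sNorm (Δ (g i))) * ‖ρ‖)) :=
          mul_le_mul_of_nonneg_left h1 (norm_nonneg _)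
      _ = ‖Q‖ * ‖ρ‖ * S * ∏ i, sNorm (Δ (g i)) := by ring
  -- average
  have hcard : (0:ℝ) < (Fintype.card G : ℝ) := by
    exact_mod_cast Fintype.card_pos
  have habs : ‖expGm (fun g : Fin m → G => (Qᴴ * seqProd Δ g ρ).trace)‖ ≤
      ((Fintype.card G : ℝ) ^ m)⁻¹ *
        ∑ g : Fin m → G, ‖(Qᴴ * seqProd Δ g ρ).trace‖ := by
    rw [expGm, norm_smul]
    gcongr
    · simp
    · simpa using
        norm_sum_le Finset.univ (fun g : Fin m → G => (Qᴴ * seqProd Δ g ρ).trace)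
  refine habs.trans ?_
  have hsum : ∑ g : Fin m → G, ‖(Qᴴ * seqProd Δ g ρ).trace‖ ≤
      ∑ g : Fin m → G, ‖Q‖ * ‖ρ‖ * S * ∏ i, sNorm (Δ (g i)) :=
    Finset.sum_le_sum fun g _ => key g
  have hpow : ∑ g : Fin m → G, ∏ i, sNorm (Δ (g i)) =
      (∑ h : G, sNorm (Δ h)) ^ m := by
    rw [Finset.sum_pow' (Finset.univ : Finset G) (fun h => sNorm (Δ h)) m]
    rw [Fintype.piFinset_univ]
  calc ((Fintype.card G : ℝ) ^ m)⁻¹ *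
        ∑ g : Fin m → G, ‖(Qᴴ * seqProd Δ g ρ).trace‖
      ≤ ((Fintype.card G : ℝ) ^ m)⁻¹ *
        ∑ g : Fin m → G, ‖Q‖ * ‖ρ‖ * S * ∏ i, sNorm (Δ (g i)) := by
        apply mul_le_mul_of_nonneg_left hsum
        positivity
    _ = ‖Q‖ * ‖ρ‖ * S * (((Fintype.card G : ℝ))⁻¹ ^ m * (∑ h : G, sNorm (Δ h)) ^ m) := by
        rw [← Finset.mul_sum, hpow, inv_pow]; ring
    _ = ‖Q‖ * ‖ρ‖ * S * (expR fun h : G => sNorm (Δ h)) ^ m := by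
        rw [expR, mul_pow]

end RBPaper
end
end

section
/- Induced trace-norm distance of a phase rotation from the identity on a qubit: for θ ∈ [0, π], let Z_θ = diag(1, e^{iθ}) ∈ M₂(ℂ). Then the supremum, over all positive-semidefinite ρ ∈ M₂(ℂ) with tr(ρ) = 1, of ‖Z_θ ρ Z_θᴴ − ρ‖₁ equals 2·sin(θ/2). -/
noncomputable section

open scoped Matrix ComplexOrder

namespace RBPaper

/-- The positive semidefinite square root of a positive semidefinite matrix
(the definition of `Matrix.PosSemidef.sqrt` in the older Mathlib, since removed). -/
def psdSqrt {n : ℕ} {A : Matrix (Fin n) (Fin n) ℂ} (hA : A.PosSemidef) :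
    Matrix (Fin n) (Fin n) ℂ :=
  (hA.1.eigenvectorUnitary : Matrix (Fin n) (Fin n) ℂ) *
    Matrix.diagonal ((↑) ∘ (√·) ∘ hA.1.eigenvalues) *
    (star hA.1.eigenvectorUnitary : Matrix (Fin n) (Fin n) ℂ)

/-- The trace norm `‖A‖₁ = tr √(Aᴴ A)` of a complex matrix. -/
def traceNorm {n : ℕ} (A : Matrix (Fin n) (Fin n) ℂ) : ℝ :=
  ((psdSqrt (Matrix.posSemidef_conjTranspose_mul_self A)).trace).re

/-- The phase matrix `Z_θ = diag(1, e^{iθ})`. -/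
def Zphase (θ : ℝ) : Matrix (Fin 2) (Fin 2) ℂ :=
  Matrix.diagonal ![1, Complex.exp (Complex.I * θ)]

lemma abs_exp_neg_sub_one {θ : ℝ} (hθ : θ ∈ Set.Icc 0 Real.pi) :
    ‖Complex.exp (-(Complex.I * θ)) - 1‖ = 2 * Real.sin (θ / 2) := by
  have h1 : Complex.exp (-(Complex.I * θ)) - 1 =
      Complex.ofReal (Real.cos θ - 1) + Complex.ofReal (-Real.sin θ) * Complex.I := by
    have : -(Complex.I * θ) = ((-θ : ℝ) : ℂ) * Complex.I := by push_cast; ring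
    rw [this, Complex.exp_mul_I, ← Complex.ofReal_cos, ← Complex.ofReal_sin]
    push_cast
    simp [Real.cos_neg, Real.sin_neg]
    ring
  rw [h1, Complex.norm_def, Complex.normSq_apply]
  simp only [Complex.add_re, Complex.ofReal_re, Complex.mul_re, Complex.I_re, Complex.I_im,
    Complex.ofReal_im, Complex.add_im, Complex.mul_im]
  have hs : Real.cos θ = 2 * Real.cos (θ/2)^2 - 1 := by
    rw [← Real.cos_two_mul]; ring_nf
  have hsn : 0 ≤ Real.sin (θ/2) := Real.sin_nonneg_of_nonneg_of_le_pi (by linarith [hθ.1]) (by linarith [hθ.2, Real.pi_pos.le])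
  have : (Real.cos θ - 1 + (-Real.sin θ * 0 - 0 * 1)) * (Real.cos θ - 1 + (-Real.sin θ * 0 - 0 * 1)) + (0 + (-Real.sin θ * 1 + 0 * 0)) * (0 + (-Real.sin θ * 1 + 0 * 0)) = (2 * Real.sin (θ/2))^2 := by
    nlinarith [hs, Real.sin_sq_add_cos_sq θ, Real.sin_sq_add_cos_sq (θ/2)]
  rw [this, Real.sqrt_sq (by positivity)]

lemma traceNorm_offdiag (w : ℂ) :
    traceNorm !![0, w; starRingEnd ℂ w, 0] = 2 * ‖w‖ := by
  set A : Matrix (Fin 2) (Fin 2) ℂ := !![0, w; starRingEnd ℂ w, 0] with hA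
  set B : Matrix (Fin 2) (Fin 2) ℂ := Matrix.diagonal ![((‖w‖ : ℝ) : ℂ), ((‖w‖ : ℝ) : ℂ)] with hB
  have hBpsd : B.PosSemidef := by
    refine Matrix.posSemidef_diagonal_iff.mpr fun i => ?_
    fin_cases i <;> simp [Complex.zero_le_real, norm_nonneg]
  have hsq : B ^ 2 = Aᴴ * A := by
    ext i j
    rw [pow_two]
    fin_cases i <;> fin_cases j <;>
      simp [hA, hB, Matrix.mul_apply, Fin.sum_univ_two, Matrix.diagonal,
        Matrix.conjTranspose_apply, ← Complex.ofReal_pow, Complex.sq_norm,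
        Complex.mul_conj, mul_comm] <;>
      rw [← Complex.ofReal_mul, Complex.norm_def, Real.mul_self_sqrt (Complex.normSq_nonneg w)]
  have hM : Aᴴ * A = ((‖w‖ ^ 2 : ℝ) : ℂ) • (1 : Matrix (Fin 2) (Fin 2) ℂ) := by
    rw [← hsq, hB]
    ext i j
    fin_cases i <;> fin_cases j <;> simp [pow_two]
  set H := Matrix.posSemidef_conjTranspose_mul_self A with hH
  have hD := H.1.spectral_theorem
  rw [Unitary.conjStarAlgAut_apply] at hD
  have hE : ∀ i, H.1.eigenvalues i = ‖w‖ ^ 2 := by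
    intro i
    have key : ∀ (u : unitary (Matrix (Fin 2) (Fin 2) ℂ)) (d : Fin 2 → ℝ),
        ((‖w‖ ^ 2 : ℝ) : ℂ) • (1 : Matrix (Fin 2) (Fin 2) ℂ) =
          (u : Matrix (Fin 2) (Fin 2) ℂ) * Matrix.diagonal (RCLike.ofReal ∘ d) *
            star (u : Matrix (Fin 2) (Fin 2) ℂ) → d i = ‖w‖ ^ 2 := by
      intro u d h
      have h2 : Matrix.diagonal (RCLike.ofReal ∘ d) = star (u : Matrix (Fin 2) (Fin 2) ℂ) *
          (((‖w‖ ^ 2 : ℝ) : ℂ) • (1 : Matrix (Fin 2) (Fin 2) ℂ)) * (u : Matrix (Fin 2) (Fin 2) ℂ) := by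
        rw [h]
        simp only [← mul_assoc, Unitary.coe_star_mul_self, one_mul]
        simp only [mul_assoc, Unitary.coe_star_mul_self, mul_one]
      rw [Matrix.mul_smul, mul_one, Matrix.smul_mul, Unitary.coe_star_mul_self] at h2
      have h3 := congrFun (congrFun h2 i) i
      simp at h3
      exact_mod_cast h3
    exact key _ _ (hM.symm.trans hD)
  show ((psdSqrt H).trace).re = 2 * ‖w‖
  rw [psdSqrt, Matrix.trace_mul_cycle, Unitary.coe_star_mul_self, one_mul, Matrix.trace_diagonal]
  simp [hE, Fin.sum_univ_two, Real.sqrt_sq (norm_nonneg w)]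

lemma diff_eq (θ : ℝ) (ρ : Matrix (Fin 2) (Fin 2) ℂ) (hρ : ρ.IsHermitian) :
    Zphase θ * ρ * (Zphase θ)ᴴ - ρ =
      !![0, (Complex.exp (-(Complex.I * θ)) - 1) * ρ 0 1;
         starRingEnd ℂ ((Complex.exp (-(Complex.I * θ)) - 1) * ρ 0 1), 0] := by
  have h10 : ρ 1 0 = starRingEnd ℂ (ρ 0 1) := by
    simpa [Matrix.conjTranspose_apply] using (congrFun (congrFun hρ 1) 0).symm
  have hc : starRingEnd ℂ (Complex.exp (Complex.I * θ)) = Complex.exp (-(Complex.I * θ)) := by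
    rw [← Complex.exp_conj]
    congr 1
    simp
  have hcc : starRingEnd ℂ (Complex.exp (-(Complex.I * θ))) = Complex.exp (Complex.I * θ) := by
    rw [← Complex.exp_conj]
    congr 1
    simp
  have he : Complex.exp (Complex.I * θ) * Complex.exp (-(Complex.I * θ)) = 1 := by
    rw [← Complex.exp_add]; simp
  ext i j
  fin_cases i <;> fin_cases j <;>
    simp [Zphase, Matrix.mul_apply, Fin.sum_univ_two, Matrix.diagonal,
      Matrix.conjTranspose_apply, h10, hc, map_mul, map_sub] <;>
  [ring; (rw [hcc]; ring); linear_combination ρ 1 1 * he]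

lemma offdiag_bound (ρ : Matrix (Fin 2) (Fin 2) ℂ) (h : ρ.PosSemidef) (ht : ρ.trace = 1) :
    ‖ρ 0 1‖ ≤ 1/2 := by
  have h10 : ρ 1 0 = starRingEnd ℂ (ρ 0 1) := by
    simpa [Matrix.conjTranspose_apply] using (congrFun (congrFun h.1 1) 0).symm
  have hd0 : ρ 0 0 = ((ρ 0 0).re : ℂ) := by
    have : starRingEnd ℂ (ρ 0 0) = ρ 0 0 := by
      simpa [Matrix.conjTranspose_apply] using congrFun (congrFun h.1 0) 0
    rw [Complex.conj_eq_iff_re] at this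
    exact this.symm
  have hd1 : ρ 1 1 = ((ρ 1 1).re : ℂ) := by
    have : starRingEnd ℂ (ρ 1 1) = ρ 1 1 := by
      simpa [Matrix.conjTranspose_apply] using congrFun (congrFun h.1 1) 1
    rw [Complex.conj_eq_iff_re] at this
    exact this.symm
  set r0 := (ρ 0 0).re with hr0d
  set r1 := (ρ 1 1).re with hr1d
  set a := (ρ 0 1).re with had
  set b := (ρ 0 1).im with hbd
  have htr : r0 + r1 = 1 := by
    have := congrArg Complex.re ht
    simpa [Matrix.trace, Matrix.diag, Fin.sum_univ_two] using this
  have hr0 : 0 ≤ r0 := by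
    have := h.re_dotProduct_nonneg ![1, 0]
    simpa [dotProduct, Matrix.mulVec, Fin.sum_univ_two, hd0] using this
  have hr1 : 0 ≤ r1 := by
    have := h.re_dotProduct_nonneg ![0, 1]
    simpa [dotProduct, Matrix.mulVec, Fin.sum_univ_two, hd1] using this
  have key : ∀ t : ℝ, 0 ≤ (a^2 + b^2) * r0 - 2 * t * (a^2 + b^2) + t^2 * r1 := by
    intro t
    have h2 := h.re_dotProduct_nonneg ![ρ 0 1, (-t : ℝ)]
    rw [show (RCLike.re : ℂ →+ ℝ) = Complex.reAddGroupHom from rfl] at h2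
    simp only [dotProduct, Matrix.mulVec, Fin.sum_univ_two, Matrix.cons_val_zero,
      Matrix.cons_val_one, Matrix.head_cons, Pi.star_apply, Complex.star_def, h10] at h2
    rw [hd0, hd1] at h2
    simp only [Complex.reAddGroupHom, AddMonoidHom.coe_mk, ZeroHom.coe_mk] at h2
    simp only [Complex.add_re, Complex.mul_re, Complex.mul_im, Complex.conj_re, Complex.conj_im,
      Complex.ofReal_re, Complex.ofReal_im, Complex.neg_re, Complex.neg_im, Complex.add_im] at h2
    nlinarith [h2]
  have h14 : a^2 + b^2 ≤ 1/4 := by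
    rcases eq_or_lt_of_le hr1 with hz | hpos
    · have k2 := key 1
      nlinarith [k2, sq_nonneg a, sq_nonneg b]
    · have k1 := key (1/2)
      nlinarith [k1, hpos, htr]
  have habs : ‖ρ 0 1‖ = Real.sqrt (a^2 + b^2) := by
    rw [Complex.norm_def, Complex.normSq_apply]; ring_nf; rfl
  rw [habs]
  calc Real.sqrt (a^2 + b^2) ≤ Real.sqrt (1/4) := Real.sqrt_le_sqrt h14
    _ = 1/2 := by rw [show (1:ℝ)/4 = (1/2)^2 by norm_num, Real.sqrt_sq (by norm_num)]

/-- Induced trace-norm distance of a phase rotation from the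
identity on a qubit: the supremum over density matrices `ρ` of
`‖Z_θ ρ Z_θᴴ − ρ‖₁` equals `2 sin(θ/2)` for `θ ∈ [0, π]`. -/
theorem phase_rotation_induced_trace_norm {θ : ℝ} (hθ : θ ∈ Set.Icc 0 Real.pi) :
    sSup {x : ℝ | ∃ ρ : Matrix (Fin 2) (Fin 2) ℂ, ρ.PosSemidef ∧ ρ.trace = 1 ∧
        x = traceNorm (Zphase θ * ρ * (Zphase θ)ᴴ - ρ)} =
      2 * Real.sin (θ / 2) := by
  have hsn : 0 ≤ Real.sin (θ/2) := Real.sin_nonneg_of_nonneg_of_le_pi (by linarith [hθ.1]) (by linarith [hθ.2, Real.pi_pos.le])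
  have hub : ∀ x ∈ {x : ℝ | ∃ ρ : Matrix (Fin 2) (Fin 2) ℂ, ρ.PosSemidef ∧ ρ.trace = 1 ∧
      x = traceNorm (Zphase θ * ρ * (Zphase θ)ᴴ - ρ)}, x ≤ 2 * Real.sin (θ / 2) := by
    rintro x ⟨ρ, hρ, htρ, rfl⟩
    rw [diff_eq θ ρ hρ.1, traceNorm_offdiag, norm_mul, abs_exp_neg_sub_one hθ]
    have := offdiag_bound ρ hρ htρ
    nlinarith [norm_nonneg (ρ 0 1)]
  -- witness
  set c : ℂ := (((Real.sqrt 2)⁻¹ : ℝ) : ℂ) with hc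
  have hcc : c * c = 1/2 := by
    rw [hc, ← Complex.ofReal_mul, ← mul_inv, Real.mul_self_sqrt (by norm_num : (0:ℝ) ≤ 2)]
    norm_num
  set ρ₀ : Matrix (Fin 2) (Fin 2) ℂ := !![1/2, 1/2; 1/2, 1/2] with hρ₀
  have hfact : (!![c, c; 0, 0] : Matrix (Fin 2) (Fin 2) ℂ)ᴴ * !![c, c; 0, 0] = ρ₀ := by
    ext i j
    fin_cases i <;> fin_cases j <;>
      simp [hρ₀, Matrix.mul_apply, Fin.sum_univ_two, Matrix.conjTranspose_apply,
        Complex.conj_ofReal, hc] <;>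
      rw [← mul_inv, ← Complex.ofReal_mul, Real.mul_self_sqrt (by norm_num : (0:ℝ) ≤ 2)] <;>
      norm_num
  have hpsd : ρ₀.PosSemidef := hfact ▸ Matrix.posSemidef_conjTranspose_mul_self _
  have htr0 : ρ₀.trace = 1 := by
    simp [hρ₀, Matrix.trace, Matrix.diag, Fin.sum_univ_two]
    norm_num
  have hval : traceNorm (Zphase θ * ρ₀ * (Zphase θ)ᴴ - ρ₀) = 2 * Real.sin (θ / 2) := by
    rw [diff_eq θ ρ₀ hpsd.1, traceNorm_offdiag, norm_mul, abs_exp_neg_sub_one hθ]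
    have : ρ₀ 0 1 = 1/2 := by simp [hρ₀]
    rw [this]
    simp
    ring
  have hmem : 2 * Real.sin (θ / 2) ∈ {x : ℝ | ∃ ρ : Matrix (Fin 2) (Fin 2) ℂ, ρ.PosSemidef ∧ ρ.trace = 1 ∧
      x = traceNorm (Zphase θ * ρ * (Zphase θ)ᴴ - ρ)} := ⟨ρ₀, hpsd, htr0, hval.symm⟩
  exact le_antisymm (csSup_le ⟨_, hmem⟩ hub) (le_csSup ⟨_, hub⟩ hmem)


end RBPaper
end
end
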